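/- Let f, a² : [0,1] → ℝ be continuous with a² ≥ 0. For fixed c ∈ ℝ, the function [0,1] ∋ w ↦ R_{f,a²}(w,c) := inf { (ν(f) − c)²/ν(a²) : ν ∈ P([0,1]), ν(id) = w } is convex in w, where the ratio is interpreted as 0 when both numerator and denominator vanish and +∞ when only the denominator vanishes. -/

import Mathlib

/-!
Convexity of the ratio `x² / y` on `ℝ × [0, ∞)`, read in `ℝ≥0∞`, is the combination of its
positive homogeneity and its subadditivity, the latter being Sedrakyan's inequality
`(x₁ + x₂)² / (y₁ + y₂) ≤ x₁² / y₁ + x₂² / y₂`. Given competitors `ν₁, ν₂` for `w₁, w₂`, the mixture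
`l ν₁ + (1 - l) ν₂` is a competitor for `l w₁ + (1 - l) w₂` whose integrals of `id`, `f` and `a²`
are the same convex combinations; taking infima over `ν₁` and `ν₂` gives the convexity of `Rfa`.
-/

open MeasureTheory
open scoped ENNReal

/-- The rate integrand `R_{f,a²}(w,c)`, valued in `ℝ≥0∞` so that the ratio is `0` when both
numerator and denominator vanish and `+∞` when only the denominator vanishes. -/
noncomputable def Rfa (f a2 : ℝ → ℝ) (w c : ℝ) : ℝ≥0∞ :=
  sInf {r : ℝ≥0∞ | ∃ ν : Measure ℝ, IsProbabilityMeasure ν ∧ ν (Set.Icc (0 : ℝ) 1)ᶜ = 0 ∧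
    (∫ x, x ∂ν) = w ∧
    r = ENNReal.ofReal (((∫ x, f x ∂ν) - c) ^ 2) / ENNReal.ofReal (∫ x, a2 x ∂ν)}

namespace ENNReal

lemma ofReal_sq_div_ofReal_add_le {x₁ x₂ y₁ y₂ : ℝ} (hy₁ : 0 ≤ y₁) (hy₂ : 0 ≤ y₂) :
    ENNReal.ofReal ((x₁ + x₂) ^ 2) / ENNReal.ofReal (y₁ + y₂) ≤
      ENNReal.ofReal (x₁ ^ 2) / ENNReal.ofReal y₁ +
        ENNReal.ofReal (x₂ ^ 2) / ENNReal.ofReal y₂ := by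
  rcases hy₁.eq_or_lt with rfl | hy₁
  · rcases eq_or_ne x₁ 0 with rfl | hx₁
    · simp
    · simp [ENNReal.div_zero, hx₁]
  rcases hy₂.eq_or_lt with rfl | hy₂
  · rcases eq_or_ne x₂ 0 with rfl | hx₂
    · simp
    · simp [ENNReal.div_zero, hx₂]
  rw [← ofReal_div_of_pos (by positivity), ← ofReal_div_of_pos hy₁, ← ofReal_div_of_pos hy₂,
    ← ofReal_add (by positivity) (by positivity)]
  refine ofReal_le_ofReal ?_
  simpa [Fin.sum_univ_two] using
    Finset.sq_sum_div_le_sum_sq_div Finset.univ ![x₁, x₂] (g := ![y₁, y₂]) (by simp [*])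

lemma ofReal_sq_mul_div_ofReal_mul {t : ℝ} (ht : 0 < t) (x y : ℝ) :
    ENNReal.ofReal ((t * x) ^ 2) / ENNReal.ofReal (t * y) =
      ENNReal.ofReal t * (ENNReal.ofReal (x ^ 2) / ENNReal.ofReal y) := by
  rw [mul_pow, sq t, mul_assoc, ofReal_mul ht.le, ofReal_mul ht.le, ofReal_mul ht.le,
    ENNReal.mul_div_mul_left _ _ (ofReal_pos.2 ht).ne' ofReal_ne_top, mul_div_assoc]

lemma ofReal_sq_div_ofReal_convexComb_le {a b x₁ x₂ y₁ y₂ : ℝ} (ha : 0 < a) (hb : 0 < b)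
    (hy₁ : 0 ≤ y₁) (hy₂ : 0 ≤ y₂) :
    ENNReal.ofReal ((a * x₁ + b * x₂) ^ 2) / ENNReal.ofReal (a * y₁ + b * y₂) ≤
      ENNReal.ofReal a * (ENNReal.ofReal (x₁ ^ 2) / ENNReal.ofReal y₁) +
        ENNReal.ofReal b * (ENNReal.ofReal (x₂ ^ 2) / ENNReal.ofReal y₂) := by
  rw [← ofReal_sq_mul_div_ofReal_mul ha, ← ofReal_sq_mul_div_ofReal_mul hb]
  exact ofReal_sq_div_ofReal_add_le (by positivity) (by positivity)

lemma le_mul_sInf_add_mul_sInf {a b x : ℝ≥0∞} {S T : Set ℝ≥0∞} (ha₀ : a ≠ 0) (ha : a ≠ ∞)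
    (hb₀ : b ≠ 0) (hb : b ≠ ∞) (h : ∀ r ∈ S, ∀ s ∈ T, x ≤ a * r + b * s) :
    x ≤ a * sInf S + b * sInf T := by
  rw [sInf_eq_iInf', sInf_eq_iInf', mul_iInf_of_ne ha₀ ha, mul_iInf_of_ne hb₀ hb]
  exact le_iInf_add_iInf fun r s ↦ h r r.2 s s.2

end ENNReal

namespace MeasureTheory

variable {X : Type*} [MeasurableSpace X]

lemma ContinuousOn.integrable_of_measure_compl_eq_zero [TopologicalSpace X] [T2Space X]
    [OpensMeasurableSpace X] {μ : Measure X} [IsFiniteMeasure μ] {s : Set X} {g : X → ℝ}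
    (hs : IsCompact s) (hg : ContinuousOn g s) (hμs : μ sᶜ = 0) : Integrable g μ := by
  rw [← Measure.restrict_eq_self_of_ae_mem (ae_iff.2 hμs)]
  exact hg.integrableOn_compact hs

lemma isProbabilityMeasure_ofReal_smul_add {l : ℝ} (hl₀ : 0 ≤ l) (hl₁ : l ≤ 1)
    (ν₁ ν₂ : Measure X) [IsProbabilityMeasure ν₁] [IsProbabilityMeasure ν₂] :
    IsProbabilityMeasure (ENNReal.ofReal l • ν₁ + ENNReal.ofReal (1 - l) • ν₂) := by
  constructor
  simp [← ENNReal.ofReal_add hl₀ (sub_nonneg.2 hl₁)]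

lemma integral_ofReal_smul_add {l : ℝ} (hl₀ : 0 ≤ l) (hl₁ : l ≤ 1) {ν₁ ν₂ : Measure X}
    {g : X → ℝ} (hg₁ : Integrable g ν₁) (hg₂ : Integrable g ν₂) :
    ∫ x, g x ∂(ENNReal.ofReal l • ν₁ + ENNReal.ofReal (1 - l) • ν₂) =
      l * ∫ x, g x ∂ν₁ + (1 - l) * ∫ x, g x ∂ν₂ := by
  rw [integral_add_measure (hg₁.smul_measure ENNReal.ofReal_ne_top)
      (hg₂.smul_measure ENNReal.ofReal_ne_top), integral_smul_measure, integral_smul_measure,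
    ENNReal.toReal_ofReal hl₀, ENNReal.toReal_ofReal (sub_nonneg.2 hl₁), smul_eq_mul, smul_eq_mul]

end MeasureTheory

lemma Rfa_le_ofReal_smul_add {f a2 : ℝ → ℝ} (hf : ContinuousOn f (Set.Icc 0 1))
    (ha2c : ContinuousOn a2 (Set.Icc 0 1)) (ha2nn : ∀ v ∈ Set.Icc (0 : ℝ) 1, 0 ≤ a2 v) (c : ℝ)
    {l : ℝ} (hl₀ : 0 < l) (hl₁ : l < 1) {ν₁ ν₂ : Measure ℝ} [IsProbabilityMeasure ν₁]
    [IsProbabilityMeasure ν₂] (hν₁ : ν₁ (Set.Icc 0 1)ᶜ = 0) (hν₂ : ν₂ (Set.Icc 0 1)ᶜ = 0) :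
    Rfa f a2 (l * ∫ x, x ∂ν₁ + (1 - l) * ∫ x, x ∂ν₂) c ≤
      ENNReal.ofReal l *
          (ENNReal.ofReal (((∫ x, f x ∂ν₁) - c) ^ 2) / ENNReal.ofReal (∫ x, a2 x ∂ν₁)) +
        ENNReal.ofReal (1 - l) *
          (ENNReal.ofReal (((∫ x, f x ∂ν₂) - c) ^ 2) / ENNReal.ofReal (∫ x, a2 x ∂ν₂)) := by
  have integral_mix {g : ℝ → ℝ} (hg : ContinuousOn g (Set.Icc 0 1)) :
      ∫ x, g x ∂(ENNReal.ofReal l • ν₁ + ENNReal.ofReal (1 - l) • ν₂) =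
        l * ∫ x, g x ∂ν₁ + (1 - l) * ∫ x, g x ∂ν₂ :=
    integral_ofReal_smul_add hl₀.le hl₁.le
      (hg.integrable_of_measure_compl_eq_zero isCompact_Icc hν₁)
      (hg.integrable_of_measure_compl_eq_zero isCompact_Icc hν₂)
  have integral_a2_nonneg {ν : Measure ℝ} (hν : ν (Set.Icc 0 1)ᶜ = 0) : 0 ≤ ∫ x, a2 x ∂ν :=
    integral_nonneg_of_ae <| (ae_iff.2 hν).mono ha2nn
  have hν : (ENNReal.ofReal l • ν₁ + ENNReal.ofReal (1 - l) • ν₂) (Set.Icc 0 1)ᶜ = 0 := by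
    simp [hν₁, hν₂]
  calc Rfa f a2 (l * ∫ x, x ∂ν₁ + (1 - l) * ∫ x, x ∂ν₂) c
      ≤ ENNReal.ofReal ((l * ((∫ x, f x ∂ν₁) - c) + (1 - l) * ((∫ x, f x ∂ν₂) - c)) ^ 2) /
          ENNReal.ofReal (l * ∫ x, a2 x ∂ν₁ + (1 - l) * ∫ x, a2 x ∂ν₂) := by
        refine sInf_le ⟨_, isProbabilityMeasure_ofReal_smul_add hl₀.le hl₁.le ν₁ ν₂, hν,
          integral_mix continuousOn_id, ?_⟩
        rw [integral_mix hf, integral_mix ha2c]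
        congr 3
        ring
    _ ≤ _ := ENNReal.ofReal_sq_div_ofReal_convexComb_le hl₀ (sub_pos.2 hl₁)
        (integral_a2_nonneg hν₁) (integral_a2_nonneg hν₂)

/-- For fixed `c`, the function `w ↦ R_{f,a²}(w,c)` is convex on `[0,1]`. -/
theorem stmt_6 (f a2 : ℝ → ℝ) (hf : ContinuousOn f (Set.Icc 0 1))
    (ha2c : ContinuousOn a2 (Set.Icc 0 1))
    (ha2nn : ∀ v ∈ Set.Icc (0 : ℝ) 1, 0 ≤ a2 v) (c : ℝ) :
    ∀ w₁ ∈ Set.Icc (0 : ℝ) 1, ∀ w₂ ∈ Set.Icc (0 : ℝ) 1, ∀ l : ℝ, 0 ≤ l → l ≤ 1 →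
      Rfa f a2 (l * w₁ + (1 - l) * w₂) c ≤
        ENNReal.ofReal l * Rfa f a2 w₁ c + ENNReal.ofReal (1 - l) * Rfa f a2 w₂ c := by
  intro w₁ _ w₂ _ l hl₀ hl₁
  rcases hl₀.eq_or_lt with rfl | hl₀
  · simp
  rcases hl₁.eq_or_lt with rfl | hl₁
  · simp
  refine ENNReal.le_mul_sInf_add_mul_sInf (by simpa) ENNReal.ofReal_ne_top
    (by simpa) ENNReal.ofReal_ne_top ?_
  rintro _ ⟨ν₁, _, hν₁, rfl, rfl⟩ _ ⟨ν₂, _, hν₂, rfl, rfl⟩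
  exact Rfa_le_ofReal_smul_add hf ha2c ha2nn c hl₀ hl₁ hν₁ hν₂
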